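/- Let G be a group and α ∈ Hⁿ(G,ℤ). If the image of α under the change of coefficients ℤ → ℝ admits a weakly bounded representative, then α admits a weakly bounded representative with values in ℤ. -/
import Mathlib


/-- The inhomogeneous coboundary operator on bar-resolution cochains with trivial
coefficients in an abelian group `M`. -/
def dTriv {G : Type*} [Group G] {M : Type*} [AddCommGroup M] (n : ℕ)
    (φ : (Fin n → G) → M) : (Fin (n + 1) → G) → M :=
  fun g => φ (fun i => g i.succ) +
    ∑ j : Fin (n + 1), ((-1 : ℤ) ^ ((j : ℕ) + 1)) • φ (Fin.contractNth j (· * ·) g)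

lemma dTriv_cast {G : Type*} [Group G] (n : ℕ) (φ : (Fin n → G) → ℤ)
    (x : Fin (n + 1) → G) :
    ((dTriv n φ x : ℤ) : ℝ) = dTriv n (fun y => (φ y : ℝ)) x := by
  simp [dTriv]

lemma dTriv_add {G : Type*} [Group G] (n : ℕ) (φ ψ : (Fin n → G) → ℝ)
    (x : Fin (n + 1) → G) :
    dTriv n (φ + ψ) x = dTriv n φ x + dTriv n ψ x := by
  simp only [dTriv, Pi.add_apply, smul_add, Finset.sum_add_distrib]
  ring

lemma dTriv_bound {G : Type*} [Group G] (n : ℕ) (h : (Fin n → G) → ℝ)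
    (hb : ∀ y, |h y| ≤ 1) (x : Fin (n + 1) → G) :
    |dTriv n h x| ≤ (n : ℝ) + 2 := by
  have hsum : |∑ j : Fin (n + 1), ((-1 : ℤ) ^ ((j : ℕ) + 1)) • h (Fin.contractNth j (· * ·) x)|
      ≤ (n : ℝ) + 1 := by
    calc |∑ j : Fin (n + 1), ((-1 : ℤ) ^ ((j : ℕ) + 1)) • h (Fin.contractNth j (· * ·) x)|
        ≤ ∑ j : Fin (n + 1), |((-1 : ℤ) ^ ((j : ℕ) + 1)) • h (Fin.contractNth j (· * ·) x)| :=
          Finset.abs_sum_le_sum_abs _ _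
      _ ≤ ∑ _j : Fin (n + 1), (1 : ℝ) := by
          refine Finset.sum_le_sum fun j _ => ?_
          rw [zsmul_eq_mul, abs_mul]
          have : |((((-1 : ℤ) ^ ((j : ℕ) + 1)) : ℤ) : ℝ)| = 1 := by
            rw [← Int.cast_abs, abs_pow, abs_neg, abs_one, one_pow]; norm_num
          rw [this, one_mul]; exact hb _
      _ = (n : ℝ) + 1 := by simp
  calc |dTriv n h x| ≤ |h (fun i => x i.succ)| +
        |∑ j : Fin (n + 1), ((-1 : ℤ) ^ ((j : ℕ) + 1)) • h (Fin.contractNth j (· * ·) x)| :=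
        abs_add_le _ _
    _ ≤ 1 + ((n : ℝ) + 1) := add_le_add (hb _) hsum
    _ = (n : ℝ) + 2 := by ring

/-- If the real class obtained from an integral (n+1)-cocycle `ω₀` by change of
coefficients has a weakly bounded representative, then `[ω₀]` has a weakly bounded
integral representative. -/
theorem stmt7 {G : Type*} [Group G] (n : ℕ)
    (ω₀ : (Fin (n + 1) → G) → ℤ) (hcoc : dTriv (n + 1) ω₀ = 0)
    (f : (Fin n → G) → ℝ)
    (hwb : ∀ tail : Fin n → G, ∃ C : ℝ, ∀ g : G,
      |(ω₀ (Fin.cons g tail) : ℝ) + dTriv n f (Fin.cons g tail)| ≤ C) :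
    ∃ f' : (Fin n → G) → ℤ, ∀ tail : Fin n → G, ∃ C : ℤ, ∀ g : G,
      |ω₀ (Fin.cons g tail) + dTriv n f' (Fin.cons g tail)| ≤ C := by
  refine ⟨fun y => ⌊f y⌋, fun tail => ?_⟩
  obtain ⟨C, hC⟩ := hwb tail
  refine ⟨⌈C⌉ + (n : ℤ) + 2, fun g => ?_⟩
  set x : Fin (n + 1) → G := Fin.cons g tail with hx
  set h : (Fin n → G) → ℝ := fun y => (⌊f y⌋ : ℝ) - f y with hh
  have hb : ∀ y, |h y| ≤ 1 := by
    intro y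
    have h1 := Int.floor_le (f y)
    have h2 := Int.lt_floor_add_one (f y)
    rw [abs_le]
    constructor <;> simp only [hh] <;> linarith
  have hsplit : (fun y => ((⌊f y⌋ : ℤ) : ℝ)) = f + h := by
    funext y; simp [hh]
  have key : ((ω₀ x + dTriv n (fun y => ⌊f y⌋) x : ℤ) : ℝ)
      = ((ω₀ x : ℝ) + dTriv n f x) + dTriv n h x := by
    push_cast
    rw [dTriv_cast, hsplit, dTriv_add]
    ring
  have hreal : |((ω₀ x + dTriv n (fun y => ⌊f y⌋) x : ℤ) : ℝ)| ≤ C + ((n : ℝ) + 2) := by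
    rw [key]
    exact (abs_add_le _ _).trans (add_le_add (hC g) (dTriv_bound n h hb x))
  have : ((|ω₀ x + dTriv n (fun y => ⌊f y⌋) x| : ℤ) : ℝ) ≤ ((⌈C⌉ + (n : ℤ) + 2 : ℤ) : ℝ) := by
    rw [Int.cast_abs]
    refine hreal.trans ?_
    push_cast
    linarith [Int.le_ceil C]
  exact_mod_cast this
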